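/- arXiv:1405.5604 — 2 statements merged into one kernel-verified Lean document; each statement's English description precedes it below -/
import Mathlib

section
/- Over the three-letter alphabet Σ = {a, b, c}, the family C(∪,·) is not closed under Kleene star: the language L = L'·{c}, where L' = {w ∈ {a,b}⁺ : |w|_a = |w|_b}, belongs to C(∪,·), but its Kleene star L* = (L'·{c})* does not belong to C(∪,·). -/
/-!
A word of a commutative language can be permuted inside the language so that all its letters `c`
stand together at the end. Hence every language of `C(∪,·)` has a bound `n` such that each of its
words is a permutation of a word of the language made of at most `n` factors with this property.
If the language has no factor `cc`, each factor holds at most one `c`, so the number of `c`s is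
bounded by `n`. The star `(L'c)*` has no factor `cc` but contains `(abc)ⁿ` for every `n`.
-/

namespace Consensual

/-- The double alphabet `Σ̃ = Σ × Bool`: second component `true` means the letter is dotted. -/
abbrev DLetter (S : Type) := S × Bool

variable {S : Type} [DecidableEq S]

/-- Partial match of two letters of the double alphabet:
`a @ å = å @ a = a`, `å @ å = å`, undefined otherwise. -/
def matchLetter (x y : DLetter S) : Option (DLetter S) :=
  if x.1 = y.1 ∧ (x.2 ∨ y.2) then some (x.1, x.2 && y.2) else none

/-- Letterwise partial match of two words over the double alphabet. -/
def matchWord : List (DLetter S) → List (DLetter S) → Option (List (DLetter S))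
  | [], [] => some []
  | x :: xs, y :: ys => do
      let l ← matchLetter x y
      let rest ← matchWord xs ys
      pure (l :: rest)
  | _, _ => none

/-- Elementwise match of two languages over the double alphabet. -/
def matchLang (B C : Language (DLetter S)) : Language (DLetter S) :=
  { w | ∃ u ∈ B, ∃ v ∈ C, matchWord u v = some w }

/-- Iterated match `B^{i@}`. -/
def matchIter (B : Language (DLetter S)) : ℕ → Language (DLetter S)
  | 0 => B
  | i + 1 => matchLang (matchIter B i) B

/-- Match closure `B^@ = ⋃ i, B^{i@}`. -/
def matchClosure (B : Language (DLetter S)) : Language (DLetter S) :=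
  ⨆ i, matchIter B i

/-- The embedding of a word over `Σ` as an undotted word over `Σ̃`. -/
def undotWord (w : List S) : List (DLetter S) := w.map (fun a => (a, false))

/-- The consensual language `C(B) = B^@ ∩ Σ*` with base `B`, as a language over `Σ`. -/
def Cons (B : Language (DLetter S)) : Language S :=
  { w | undotWord w ∈ matchClosure B }

/-- A word consisting only of dotted letters. -/
def allDotted (w : List (DLetter S)) : Prop := ∀ l ∈ w, l.2 = true

/-- `Σ̊*`, the language of all-dotted words (including ε). -/
def dottedStar : Language (DLetter S) := { w | allDotted w }

/-- `B ⊆ Σ̃* − Σ̊⁺`: no nonempty all-dotted word belongs to `B`. -/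
def ProperBase (B : Language (DLetter S)) : Prop :=
  ∀ w ∈ B, w ≠ [] → ¬ allDotted w

/-- `B` is in decomposed form with scaffold `sc` and fill `fl`. -/
def IsDecomposed (B sc fl : Language (DLetter S)) : Prop :=
  ProperBase B ∧ B = sc ⊔ fl ∧ Disjoint sc fl ∧
    Cons fl = (⊥ : Language S) ∧ matchLang sc sc = (⊥ : Language (DLetter S))

/-- Two decomposed bases `sc' ⊔ fl'` and `sc'' ⊔ fl''` are joinable. -/
def Joinable (sc' fl' sc'' fl'' : Language (DLetter S)) : Prop :=
  IsDecomposed ((sc' ⊔ fl') ⊔ (sc'' ⊔ fl'')) (sc' ⊔ sc'') (fl' ⊔ fl'') ∧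
    matchLang sc' fl'' = (⊥ : Language (DLetter S)) ∧
    matchLang sc'' fl' = (⊥ : Language (DLetter S))

/-- `dot`: make every letter of a word dotted. -/
def dotWord (w : List (DLetter S)) : List (DLetter S) := w.map (fun l => (l.1, true))

/-- The dot-product `B' ⊙ B'' = (sc'·sc'') ⊔ fl' ⊔ fl''` of two decomposed bases. -/
def dotProduct (sc' fl' sc'' fl'' : Language (DLetter S)) : Language (DLetter S) :=
  (sc' * sc'') ⊔ fl' ⊔ fl''

/-- Two decomposed bases `sc' ⊔ fl'` and `sc'' ⊔ fl''` are concatenable. -/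
def Concatenable (sc' fl' sc'' fl'' : Language (DLetter S)) : Prop :=
  IsDecomposed (dotProduct sc' fl' sc'' fl'') (sc' * sc'') (fl' ⊔ fl'') ∧
  (∀ w' : List (DLetter S), w' ≠ [] → ∀ y' ∈ sc', ∀ y'' ∈ sc'',
    ((∃ x' ∈ fl', w' = x' ++ dotWord y'' ∧ (matchWord x' y').isSome) ↔
      (w' ∈ fl' ∧ (matchWord w' (y' ++ y'')).isSome))) ∧
  (∀ w'' : List (DLetter S), w'' ≠ [] → ∀ y' ∈ sc', ∀ y'' ∈ sc'',
    ((∃ x'' ∈ fl'', w'' = dotWord y' ++ x'' ∧ (matchWord x'' y'').isSome) ↔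
      (w'' ∈ fl'' ∧ (matchWord w'' (y' ++ y'')).isSome)))

/-! ### Slots, scaffolds and fills -/

/-- The word `å a^{r−1} å a^{m−r−1}`. -/
def slotWord (m r : ℕ) (a : S) : List (DLetter S) :=
  (a, true) :: (List.replicate (r - 1) (a, false) ++
    (a, true) :: List.replicate (m - r - 1) (a, false))

/-- `R_m(a) = {å a^{r−1} å a^{m−r−1} : r ∈ R}`. -/
def Rm (m : ℕ) (R : Set ℕ) (a : S) : Language (DLetter S) :=
  { w | ∃ r ∈ R, w = slotWord m r a }

/-- Projection of a word over `Σ̃` on the two-letter alphabet `{a, å}`. -/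
def projA (a : S) (x : List (DLetter S)) : List (DLetter S) :=
  x.filter (fun l => decide (l.1 = a))

/-- The scaffold language `sc_{R,m}`. -/
def scaffold (m : ℕ) (R : Set ℕ) : Language (DLetter S) :=
  { x | ∀ a : S, projA a x ∈ KStar.kstar (Rm m R a ⊔ {[(a, false)]}) }

/-- `switch`: interchange `a` and `å` in every position. -/
def switchWord (w : List (DLetter S)) : List (DLetter S) := w.map (fun l => (l.1, !l.2))

/-- The fill language `fl_{R,m} = switch(sc_{R,m}) − Σ̊*`. -/
def fill (m : ℕ) (R : Set ℕ) : Language (DLetter S) :=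
  { w | ∃ u ∈ scaffold (S := S) m R, w = switchWord u } \ dottedStar

/-- A language is shiftable if it absorbs all-dotted padding on both sides. -/
def Shiftable (F : Language (DLetter S)) : Prop :=
  F = dottedStar * F * dottedStar

/-- `R` is a set of slots of module `m`. -/
def SlotSet (m : ℕ) (R : Set ℕ) : Prop :=
  4 ≤ m ∧ 2 ∣ m ∧ R.Nonempty ∧ ∀ r ∈ R, 1 ≤ r ∧ r ≤ m / 2 - 1

/-- The factor `α(i)…α(i+m−1)` of `α` (positions numbered from 1). -/
def factorAt (α : List (DLetter S)) (i m : ℕ) : List (DLetter S) :=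
  (α.drop (i - 1)).take m

/-- `i` is a restarting point of `α ∈ π_ã(sc_{R,m})`. -/
def RestartScaffold (m : ℕ) (R : Set ℕ) (a : S) (α : List (DLetter S)) (i : ℕ) : Prop :=
  1 ≤ i ∧ i + m - 1 ≤ α.length ∧ factorAt α i m ∈ Rm m R a

/-- `i` is a restarting point of `α ∈ π_ã(fl_{R̂,m})`. -/
def RestartFill (m : ℕ) (Rh : Set ℕ) (a : S) (α : List (DLetter S)) (i : ℕ) : Prop :=
  1 ≤ i ∧ i + m - 1 ≤ α.length ∧ (∃ u ∈ Rm m Rh a, factorAt α i m = switchWord u)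

/-! ### Parikh images, COM-SLIP, and the family C(⊔,·) -/

/-- The Parikh image of a word. -/
def parikh (w : List S) : S → ℕ := fun a => w.count a

/-- A linear subset of `ℕ^Σ`. -/
def IsLinearSet (T : Set (S → ℕ)) : Prop :=
  ∃ (q : ℕ) (c : S → ℕ) (p : Fin q → S → ℕ),
    T = { v | ∃ n : Fin q → ℕ, v = c + ∑ i, n i • p i }

/-- A semilinear subset of `ℕ^Σ`: a finite union of linear sets. -/
def IsSemilinearSet (T : Set (S → ℕ)) : Prop :=
  ∃ (t : ℕ) (f : Fin t → Set (S → ℕ)), (∀ i, IsLinearSet (f i)) ∧ T = ⋃ i, f i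

/-- A commutative language: membership only depends on the Parikh image. -/
def CommutativeLang (L : Language S) : Prop :=
  ∀ w ∈ L, ∀ v : List S, parikh v = parikh w → v ∈ L

/-- A COM-SLIP language: commutative with semilinear Parikh image. -/
def IsComSlip (L : Language S) : Prop :=
  CommutativeLang L ∧ IsSemilinearSet (parikh '' L)

/-- The family `C(⊔,·)`: the smallest family containing the COM-SLIP languages and
closed under binary union and concatenation. -/
inductive CUC {S : Type} [DecidableEq S] : Language S → Prop
  | base {L : Language S} : IsComSlip L → CUC L
  | union {L M : Language S} : CUC L → CUC M → CUC (L ⊔ M)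
  | concat {L M : Language S} : CUC L → CUC M → CUC (L * M)

/-- Regular languages, via acceptance by a DFA with finitely many states. -/
def IsRegularLang {γ : Type} (B : Language γ) : Prop :=
  ∃ (σ : Type) (_ : Fintype σ) (M : DFA γ σ), M.accepts = B

/-! ### Shuffle, appending, and the base `D` for a COM-LIP language -/

/-- `IsShuffle x y z`: `z` is an interleaving of `x` and `y`. -/
inductive IsShuffle {γ : Type} : List γ → List γ → List γ → Prop
  | nil : IsShuffle [] [] []
  | left {x : γ} {xs ys zs} : IsShuffle xs ys zs → IsShuffle (x :: xs) ys (x :: zs)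
  | right {y : γ} {xs ys zs} : IsShuffle xs ys zs → IsShuffle xs (y :: ys) (y :: zs)

/-- The shuffle of two languages. -/
def shuffleLang {γ : Type} (L M : Language γ) : Language γ :=
  { z | ∃ x ∈ L, ∃ y ∈ M, IsShuffle x y z }

/-- Split `w` as `u·v` where `v` is the longest suffix of `w` with no occurrence
of `a` or `å`; returns `(u, v)`. -/
def splitSuffix (a : S) (w : List (DLetter S)) : List (DLetter S) × List (DLetter S) :=
  ((w.reverse.dropWhile (fun l => decide (l.1 ≠ a))).reverse,
   (w.reverse.takeWhile (fun l => decide (l.1 ≠ a))).reverse)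

/-- The append operation `B ◁ A` for `A ⊆ a⁺`. -/
def appendA (a : S) (B : Language (DLetter S)) (A : Language S) : Language (DLetter S) :=
  { w' | ∃ w ∈ B, ∃ s ∈ A, ∃ z, IsShuffle (splitSuffix a w).2 (undotWord s) z ∧
      w' = (splitSuffix a w).1 ++ z }

/-- Projection of a language over `Σ` on the single letter `a`. -/
def projLetter (a : S) (F : Language S) : Language S :=
  { y | ∃ w ∈ F, y = w.filter (fun l => decide (l = a)) }

/-- Letter-by-letter appending `B ◁ F` (over the alphabet `Fin k`,
processing the letters `a₁, …, a_k` in order). -/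
def lblAppend {k : ℕ} (B : Language (DLetter (Fin k))) (F : Language (Fin k)) :
    Language (DLetter (Fin k)) :=
  (List.finRange k).foldl (fun Bc a => appendA a Bc (projLetter a F)) B

/-- Projection of a word over `Σ̃` on the undotted letters. -/
def projSigma (x : List (DLetter S)) : List S :=
  (x.filter (fun l => !l.2)).map Prod.fst

/-- The fill part `X` of the decomposed base for a COM-LIP language with periods `p`. -/
def Xlang {k q : ℕ} (m r : ℕ) (p : Fin q → Fin k → ℕ) : Language (DLetter (Fin k)) :=
  { x | x ∈ fill m {r} ∧ ∃ i : Fin q, parikh (projSigma x) = p i }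

/-- `Y = (R_m(a₁))* ⧢ … ⧢ (R_m(a_k))*`. -/
def Ylang (k : ℕ) (m : ℕ) (R : Set ℕ) : Language (DLetter (Fin k)) :=
  (List.finRange k).foldl
    (fun acc a => shuffleLang acc (KStar.kstar (Rm m R a))) (1 : Language (DLetter (Fin k)))

/-- The finite commutative language `W` with Parikh image
`{c + h₁p⁽¹⁾ + … + h_qp⁽q⁾ : 0 ≤ hⱼ < m/2}`. -/
def Wlang {k q : ℕ} (m : ℕ) (c : Fin k → ℕ) (p : Fin q → Fin k → ℕ) : Language (Fin k) :=
  { w | ∃ h : Fin q → ℕ, (∀ i, h i < m / 2) ∧ parikh w = c + ∑ i, h i • p i }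

/-- The decomposed base `D = X ⊔ (Y ◁ W)` for a COM-LIP language. -/
def Dlang {k q : ℕ} (m r : ℕ) (c : Fin k → ℕ) (p : Fin q → Fin k → ℕ) :
    Language (DLetter (Fin k)) :=
  Xlang m r p ⊔ lblAppend (Ylang k m {r}) (Wlang m c p)

/-- `matchListAll [x₁, …, x_n] = some u` iff `u = x₁ @ x₂ @ … @ x_n`. -/
def matchListAll : List (List (DLetter S)) → Option (List (DLetter S))
  | [] => none
  | [x] => some x
  | x :: xs => (matchListAll xs).bind (fun u => matchWord x u)


/-- `L' = {w ∈ {a,b}⁺ : |w|_a = |w|_b}` over the alphabet `{a, b, c} = Fin 3`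
(`a = 0`, `b = 1`, `c = 2`). -/
def LprimeAB : Language (Fin 3) :=
  { w | w ≠ [] ∧ (∀ l ∈ w, l = 0 ∨ l = 1) ∧ w.count 0 = w.count 1 }

/-- `L = L'·{c}`. -/
def LprimeC : Language (Fin 3) := LprimeAB * {[2]}

end Consensual

namespace Consensual

variable {S : Type}

lemma parikh_eq_iff_perm [DecidableEq S] {v w : List S} : parikh v = parikh w ↔ v.Perm w := by
  rw [List.perm_iff_count, funext_iff]
  rfl

lemma commutativeLang_iff [DecidableEq S] {L : Language S} :
    CommutativeLang L ↔ ∀ w ∈ L, ∀ v : List S, v.Perm w → v ∈ L := by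
  simp only [CommutativeLang, parikh_eq_iff_perm]

lemma isLinearSet_singleton (c : S → ℕ) : IsLinearSet {c} :=
  ⟨0, c, Fin.elim0, by simp⟩

lemma isLinearSet_ray (c p : S → ℕ) : IsLinearSet {v | ∃ n : ℕ, v = c + n • p} :=
  ⟨1, c, fun _ => p, by
    ext v
    exact ⟨fun ⟨n, hn⟩ => ⟨fun _ => n, by simpa using hn⟩,
      fun ⟨n, hn⟩ => ⟨n 0, by simpa using hn⟩⟩⟩

lemma isSemilinearSet_of_isLinearSet {T : Set (S → ℕ)} (h : IsLinearSet T) :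
    IsSemilinearSet T :=
  ⟨1, fun _ => T, fun _ => h, (Set.iUnion_const T).symm⟩

lemma isComSlip_singleton_letter [DecidableEq S] (a : S) : IsComSlip ({[a]} : Language S) := by
  refine ⟨commutativeLang_iff.2 ?_, ?_⟩
  · rintro w rfl v hv
    exact List.perm_singleton.1 hv
  · have : parikh '' ({[a]} : Language S) = {parikh [a]} := Set.image_singleton
    exact this ▸ isSemilinearSet_of_isLinearSet (isLinearSet_singleton _)

lemma isChain_of_mem_kstar {R : S → S → Prop} {L : Language S}
    (hL : ∀ y ∈ L, y ≠ [] ∧ y.IsChain R)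
    (hR : ∀ y ∈ L, ∀ z ∈ L, ∀ x ∈ y.getLast?, ∀ a ∈ z.head?, R x a)
    {v : List S} (hv : v ∈ KStar.kstar L) : v.IsChain R := by
  obtain ⟨ys, rfl, hys⟩ := Language.mem_kstar.1 hv
  refine (List.isChain_flatten fun h => (hL [] (hys [] h)).1 rfl).2
    ⟨fun y hy => (hL y (hys y hy)).2, ?_⟩
  exact (List.pairwise_of_forall_mem_list fun y hy z hz => hR y (hys y hy) z (hys z hz)).isChain

section BlockBounded

variable (c : S)

def OccursOnlyAtEnd (s : List S) : Prop :=
  ∃ u k, c ∉ u ∧ s = u ++ List.replicate k c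

def BlockBounded (n : ℕ) (L : Language S) : Prop :=
  ∀ w ∈ L, ∃ v ∈ L, v.Perm w ∧ ∃ ss : List (List S),
    v = ss.flatten ∧ ss.length ≤ n ∧ ∀ s ∈ ss, OccursOnlyAtEnd c s

variable {c}

lemma CommutativeLang.blockBounded [DecidableEq S] {L : Language S} (hL : CommutativeLang L) :
    BlockBounded c 1 L := by
  intro w hw
  have hperm : (w.filter (fun x => !decide (x = c)) ++ List.replicate (w.count c) c).Perm w := by
    rw [← List.filter_eq c]
    exact List.perm_append_comm.trans (List.filter_append_perm _ w)
  refine ⟨_, commutativeLang_iff.1 hL w hw _ hperm, hperm, [_], List.flatten_singleton.symm,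
    le_rfl, ?_⟩
  simp only [List.mem_singleton, forall_eq]
  exact ⟨_, _, by simp, rfl⟩

lemma BlockBounded.mono {n m : ℕ} {L : Language S} (h : BlockBounded c n L) (hnm : n ≤ m) :
    BlockBounded c m L := by
  intro w hw
  obtain ⟨v, hv, hperm, ss, rfl, hlen, hss⟩ := h w hw
  exact ⟨_, hv, hperm, ss, rfl, hlen.trans hnm, hss⟩

lemma BlockBounded.sup {n : ℕ} {L M : Language S} (hL : BlockBounded c n L)
    (hM : BlockBounded c n M) : BlockBounded c n (L ⊔ M) := by
  rintro w (hw | hw)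
  · obtain ⟨v, hv, rest⟩ := hL w hw
    exact ⟨v, Or.inl hv, rest⟩
  · obtain ⟨v, hv, rest⟩ := hM w hw
    exact ⟨v, Or.inr hv, rest⟩

lemma BlockBounded.mul {n m : ℕ} {L M : Language S} (hL : BlockBounded c n L)
    (hM : BlockBounded c m M) : BlockBounded c (n + m) (L * M) := by
  intro w hw
  obtain ⟨w₁, hw₁, w₂, hw₂, rfl⟩ := Language.mem_mul.1 hw
  obtain ⟨v₁, hv₁, hperm₁, ss₁, rfl, hlen₁, hss₁⟩ := hL w₁ hw₁
  obtain ⟨v₂, hv₂, hperm₂, ss₂, rfl, hlen₂, hss₂⟩ := hM w₂ hw₂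
  refine ⟨_, Language.append_mem_mul hv₁ hv₂, hperm₁.append hperm₂, ss₁ ++ ss₂, by simp, ?_,
    ?_⟩
  · simpa using Nat.add_le_add hlen₁ hlen₂
  · intro s hs
    exact (List.mem_append.1 hs).elim (hss₁ s) (hss₂ s)

lemma CUC.exists_blockBounded [DecidableEq S] {L : Language S} (h : CUC L) :
    ∃ n, BlockBounded c n L := by
  induction h with
  | base hL => exact ⟨1, hL.1.blockBounded⟩
  | union _ _ ihL ihM =>
    obtain ⟨n, hn⟩ := ihL
    obtain ⟨m, hm⟩ := ihM
    exact ⟨max n m, (hn.mono (le_max_left n m)).sup (hm.mono (le_max_right n m))⟩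
  | concat _ _ ihL ihM =>
    obtain ⟨n, hn⟩ := ihL
    obtain ⟨m, hm⟩ := ihM
    exact ⟨n + m, hn.mul hm⟩

lemma OccursOnlyAtEnd.count_le_one [DecidableEq S] {s : List S} (hs : OccursOnlyAtEnd c s)
    (hcc : ¬ [c, c] <:+: s) : s.count c ≤ 1 := by
  obtain ⟨u, k, hu, rfl⟩ := hs
  have hk : k ≤ 1 := by
    by_contra! hk
    obtain ⟨k, rfl⟩ := Nat.exists_eq_add_of_le hk
    exact hcc ⟨u, List.replicate k c, by simp [List.replicate_add]⟩
  simpa [List.count_eq_zero_of_not_mem hu, List.count_replicate_self] using hk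

lemma BlockBounded.count_le [DecidableEq S] {n : ℕ} {L : Language S} (h : BlockBounded c n L)
    (hcc : ∀ v ∈ L, ¬ [c, c] <:+: v) {w : List S} (hw : w ∈ L) : w.count c ≤ n := by
  obtain ⟨v, hv, hperm, ss, rfl, hlen, hss⟩ := h w hw
  have hblock : ∀ s ∈ ss, s.count c ≤ 1 := fun s hs =>
    (hss s hs).count_le_one fun h => hcc _ hv (h.trans (List.infix_of_mem_flatten hs))
  calc w.count c = (ss.map (List.count c)).sum := by rw [← hperm.count_eq, List.count_flatten]
    _ ≤ ss.length := by
      simpa using List.sum_le_card_nsmul _ 1 (List.forall_mem_map.2 hblock)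
    _ ≤ n := hlen

lemma CUC.exists_count_le [DecidableEq S] {L : Language S} (h : CUC L)
    (hcc : ∀ v ∈ L, ¬ [c, c] <:+: v) :
    ∃ n, ∀ w ∈ L, w.count c ≤ n := by
  obtain ⟨n, hn⟩ := h.exists_blockBounded (c := c)
  exact ⟨n, fun w hw => hn.count_le hcc hw⟩

end BlockBounded

lemma count_two_eq_zero_of_mem_LprimeAB {w : List (Fin 3)} (hw : w ∈ LprimeAB) :
    w.count 2 = 0 :=
  List.count_eq_zero.2 fun h => by rcases hw.2.1 2 h with h | h <;> exact absurd h (by decide)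

lemma parikh_image_LprimeAB :
    parikh '' LprimeAB = {v | ∃ n : ℕ, v = parikh [0, 1] + n • parikh [0, 1]} := by
  ext v
  constructor
  · rintro ⟨w, hw, rfl⟩
    have h2 := count_two_eq_zero_of_mem_LprimeAB hw
    obtain ⟨hne, hab, hcount⟩ := hw
    have hpos : 0 < w.count 0 := by
      obtain ⟨x, t, rfl⟩ := List.exists_cons_of_ne_nil hne
      rcases hab x (by simp) with rfl | rfl
      · simp
      · simp [hcount]
    refine ⟨w.count 0 - 1, funext fun a => ?_⟩
    fin_cases a <;> simp [parikh] <;> omega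
  · rintro ⟨n, rfl⟩
    refine ⟨List.replicate (n + 1) 0 ++ List.replicate (n + 1) 1, ⟨by simp, ?_, ?_⟩, ?_⟩
    · intro l hl
      rcases List.mem_append.1 hl with h | h
      exacts [Or.inl (List.eq_of_mem_replicate h), Or.inr (List.eq_of_mem_replicate h)]
    · simp [List.count_replicate]
    · funext a
      fin_cases a <;> simp [parikh, List.count_replicate] <;> omega

lemma isComSlip_LprimeAB : IsComSlip LprimeAB := by
  refine ⟨commutativeLang_iff.2 ?_,
    parikh_image_LprimeAB ▸ isSemilinearSet_of_isLinearSet (isLinearSet_ray _ _)⟩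
  rintro w ⟨hne, hab, hcount⟩ v hperm
  refine ⟨?_, fun l hl => hab l (hperm.mem_iff.1 hl),
    by rw [hperm.count_eq, hperm.count_eq, hcount]⟩
  rintro rfl
  exact hne (List.Perm.nil_eq hperm).symm

lemma cuc_LprimeC : CUC LprimeC :=
  .concat (.base isComSlip_LprimeAB) (.base (isComSlip_singleton_letter 2))

lemma isChain_of_mem_LprimeC {y : List (Fin 3)} (hy : y ∈ LprimeC) :
    y ≠ [] ∧ y.IsChain (fun x z => x ≠ 2 ∨ z ≠ 2) ∧ ∀ x ∈ y.head?, x ≠ 2 := by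
  obtain ⟨u, hu, _, rfl, rfl⟩ := Language.mem_mul.1 hy
  have hne2 : ∀ x ∈ u, x ≠ 2 := fun x hx => by
    rcases hu.2.1 x hx with rfl | rfl <;> decide
  obtain ⟨a, t, rfl⟩ := List.exists_cons_of_ne_nil hu.1
  refine ⟨by simp, List.isChain_append.2 ⟨?_, List.isChain_singleton 2, ?_⟩, ?_⟩
  · exact (List.pairwise_of_forall_mem_list fun x hx _ _ => Or.inl (hne2 x hx)).isChain
  · exact fun x hx _ _ => Or.inl (hne2 x (List.mem_of_mem_getLast? hx))
  · simpa using hne2 a (by simp)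

lemma not_infix_of_mem_kstar_LprimeC {v : List (Fin 3)} (hv : v ∈ KStar.kstar LprimeC) :
    ¬ [2, 2] <:+: v := by
  intro hinf
  have hchain := isChain_of_mem_kstar
    (fun y hy => (isChain_of_mem_LprimeC hy).imp_right And.left)
    (fun _ _ z hz _ _ a ha => Or.inr ((isChain_of_mem_LprimeC hz).2.2 a ha)) hv
  simpa using hchain.infix hinf

lemma abc_pow_mem_kstar_LprimeC (n : ℕ) :
    (List.replicate n [0, 1, 2]).flatten ∈ KStar.kstar LprimeC :=
  Language.join_mem_kstar fun y hy => List.eq_of_mem_replicate hy ▸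
    Language.append_mem_mul (a := [0, 1]) ⟨by simp, by decide, by decide⟩ rfl

/-- Over `{a, b, c}`, the family `C(∪,·)` is not closed under Kleene
star: `L = L'·{c}` is in `C(∪,·)` but `L*` is not. -/
theorem cuc_not_closed_under_star :
    CUC LprimeC ∧ ¬ CUC (KStar.kstar LprimeC) := by
  refine ⟨cuc_LprimeC, fun h => ?_⟩
  obtain ⟨n, hn⟩ := h.exists_count_le fun _ => not_infix_of_mem_kstar_LprimeC
  have := hn _ (abc_pow_mem_kstar_LprimeC (n + 1))
  simp [List.count_flatten, List.sum_replicate] at this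

end Consensual
end

section
/- If B' and B'' are bases in decomposed form that are joinable, then C(B') ∪ C(B'') = C(B' ∪ B''). -/
namespace Consensual

variable {S : Type} [DecidableEq S]

/-! A word of `C(B' ∪ B'')` is a match `x₁ @ ⋯ @ xₙ` of base words, and these are pairwise
matchable because `u @ v` matches no more than `u` does. Since the fill is unproductive, some
`xᵢ` lies in a scaffold, say `sc'`; by joinability it matches nothing in `sc'' ∪ fl''`, so every
`xⱼ` lies in `B'` and the word belongs to `C(B')`. -/

lemma matchLetter_comm (x y : DLetter S) : matchLetter x y = matchLetter y x := by
  obtain ⟨a, da⟩ := x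
  obtain ⟨b, db⟩ := y
  by_cases h : a = b
  · subst h; cases da <;> cases db <;> simp [matchLetter]
  · simp [matchLetter, h, Ne.symm h]

lemma matchWord_comm : ∀ x y : List (DLetter S), matchWord x y = matchWord y x
  | [], [] => rfl
  | [], _ :: _ => rfl
  | _ :: _, [] => rfl
  | x :: xs, y :: ys => by simp [matchWord, matchLetter_comm x y, matchWord_comm xs ys]

/-- `a @ b` is dotted only where `a` is, so it matches no more letters than `a`. -/
lemma isSome_matchLetter_of_matchLetter_eq_some {a b l y : DLetter S}
    (h : matchLetter a b = some l) (hl : (matchLetter l y).isSome) :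
    (matchLetter a y).isSome := by
  obtain ⟨a, da⟩ := a
  obtain ⟨y, dy⟩ := y
  unfold matchLetter at *
  split_ifs at h
  cases h
  cases da <;> cases dy <;> simp_all

lemma isSome_matchWord_of_matchWord_eq_some :
    ∀ {a b u y : List (DLetter S)}, matchWord a b = some u →
      (matchWord u y).isSome → (matchWord a y).isSome
  | [], [], u, y, h, hu => by
    cases h
    cases y <;> simp_all [matchWord]
  | x :: xs, b :: bs, u, y :: ys, h, hu => by
    simp only [matchWord, Option.bind_eq_bind, Option.pure_def, Option.bind_eq_some_iff,
      Option.some_inj] at h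
    obtain ⟨l, hl, rest, hrest, rfl⟩ := h
    simp only [matchWord, Option.bind_eq_bind, Option.pure_def, Option.isSome_bind,
      Option.isSome_some, Option.any_eq_true] at hu ⊢
    obtain ⟨l', hl', rest', hrest', -⟩ := hu
    obtain ⟨l'', hl''⟩ := Option.isSome_iff_exists.mp
      (isSome_matchLetter_of_matchLetter_eq_some hl (Option.isSome_iff_exists.mpr ⟨_, hl'⟩))
    obtain ⟨r, hr⟩ := Option.isSome_iff_exists.mp
      (isSome_matchWord_of_matchWord_eq_some hrest (Option.isSome_iff_exists.mpr ⟨_, hrest'⟩))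
    exact ⟨l'', hl'', r, hr, trivial⟩
  | [], _ :: _, _, _, h, _ | _ :: _, [], _, _, h, _ => by simp [matchWord] at h
  | _ :: _, _ :: _, u, [], h, hu => by
    simp only [matchWord, Option.bind_eq_bind, Option.pure_def, Option.bind_eq_some_iff,
      Option.some_inj] at h
    obtain ⟨_, -, _, -, rfl⟩ := h
    simp [matchWord] at hu

lemma matchLang_eq_bot_iff {L M : Language (DLetter S)} :
    matchLang L M = ⊥ ↔ ∀ x ∈ L, ∀ y ∈ M, matchWord x y = none := by
  refine ⟨fun h x hx y hy => ?_, fun h => le_bot_iff.mp fun w ⟨x, hx, y, hy, hxy⟩ => ?_⟩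
  · cases hxy : matchWord x y with
    | none => rfl
    | some w => exact absurd (h ▸ ⟨x, hx, y, hy, hxy⟩ : w ∈ (⊥ : Language _)) id
  · simp [h x hx y hy] at hxy

lemma matchIter_mono {B C : Language (DLetter S)} (h : B ≤ C) : ∀ i, matchIter B i ≤ matchIter C i
  | 0 => h
  | i + 1 => fun _ ⟨u, hu, v, hv, huv⟩ => ⟨u, matchIter_mono h i hu, v, h hv, huv⟩

lemma cons_mono {B C : Language (DLetter S)} (h : B ≤ C) : Cons B ≤ Cons C :=
  fun _ hw => iSup_mono (matchIter_mono h) hw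

/-- `IsMatchOf [xₙ, …, x₁] u` says `u = ((x₁ @ x₂) @ ⋯) @ xₙ`. -/
inductive IsMatchOf : List (List (DLetter S)) → List (DLetter S) → Prop
  | single (x : List (DLetter S)) : IsMatchOf [x] x
  | cons {xs u v w} : IsMatchOf xs u → matchWord u v = some w → IsMatchOf (v :: xs) w

lemma exists_isMatchOf_of_mem_matchIter {B : Language (DLetter S)} :
    ∀ {i : ℕ} {w : List (DLetter S)}, w ∈ matchIter B i →
      ∃ xs, (∀ x ∈ xs, x ∈ B) ∧ IsMatchOf xs w
  | 0, w, hw => ⟨[w], List.forall_mem_singleton.mpr hw, .single w⟩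
  | _ + 1, _, ⟨_, hu, v, hv, huv⟩ =>
    let ⟨xs, hxs, h⟩ := exists_isMatchOf_of_mem_matchIter hu
    ⟨v :: xs, List.forall_mem_cons.mpr ⟨hv, hxs⟩, h.cons huv⟩

lemma IsMatchOf.exists_mem_matchIter {B : Language (DLetter S)} {xs : List (List (DLetter S))}
    {w : List (DLetter S)} (h : IsMatchOf xs w) (hxs : ∀ x ∈ xs, x ∈ B) :
    ∃ i, w ∈ matchIter B i := by
  induction h with
  | single x => exact ⟨0, hxs x (List.mem_singleton_self x)⟩
  | @cons xs u v w _ huv ih =>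
    obtain ⟨hv, hxs⟩ := List.forall_mem_cons.mp hxs
    obtain ⟨i, hi⟩ := ih hxs
    exact ⟨i + 1, u, hi, v, hv, huv⟩

lemma mem_matchClosure_iff {B : Language (DLetter S)} {w : List (DLetter S)} :
    w ∈ matchClosure B ↔ ∃ xs, (∀ x ∈ xs, x ∈ B) ∧ IsMatchOf xs w :=
  Language.mem_iSup.trans ⟨fun ⟨_, hi⟩ => exists_isMatchOf_of_mem_matchIter hi,
    fun ⟨_, hxs, h⟩ => h.exists_mem_matchIter hxs⟩

namespace IsMatchOf

variable {xs : List (List (DLetter S))} {u : List (DLetter S)}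

lemma isSome_matchWord_of_mem (h : IsMatchOf xs u) {x y : List (DLetter S)} (hx : x ∈ xs)
    (hu : (matchWord u y).isSome) : (matchWord x y).isSome := by
  induction h with
  | single => rwa [List.mem_singleton.mp hx]
  | @cons xs u v w _ huv ih =>
    rcases List.mem_cons.mp hx with rfl | hx
    · exact isSome_matchWord_of_matchWord_eq_some (matchWord_comm u x ▸ huv) hu
    · exact ih hx (isSome_matchWord_of_matchWord_eq_some huv hu)

lemma eq_or_isSome_matchWord (h : IsMatchOf xs u) {s x : List (DLetter S)} (hs : s ∈ xs)
    (hx : x ∈ xs) : x = s ∨ (matchWord s x).isSome := by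
  induction h with
  | single => simp_all
  | @cons xs u v w hu huv ih =>
    have hv : ∀ y ∈ xs, (matchWord y v).isSome := fun y hy =>
      hu.isSome_matchWord_of_mem hy (Option.isSome_iff_exists.mpr ⟨w, huv⟩)
    rcases List.mem_cons.mp hs with rfl | hs <;> rcases List.mem_cons.mp hx with hx | hx
    · exact .inl hx
    · exact .inr (matchWord_comm s x ▸ hv x hx)
    · exact .inr (hx ▸ hv s hs)
    · exact ih hs hx

lemma mem_matchClosure_of_forall_matchWord_eq_none {B C : Language (DLetter S)}
    (h : IsMatchOf xs u) (hxs : ∀ x ∈ xs, x ∈ B ⊔ C) {s : List (DLetter S)} (hs : s ∈ xs)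
    (hsB : s ∈ B) (hsC : ∀ x ∈ C, matchWord s x = none) : u ∈ matchClosure B := by
  refine mem_matchClosure_iff.mpr ⟨xs, fun x hx => ?_, h⟩
  rcases h.eq_or_isSome_matchWord hs hx with rfl | hsx
  · exact hsB
  · exact (hxs x hx).resolve_right fun hxC => by simp [hsC x hxC] at hsx

end IsMatchOf

theorem cons_union_of_joinable_general (sc' fl' sc'' fl'' : Language (DLetter S))
    (hj : Joinable sc' fl' sc'' fl'') :
    Cons (sc' ⊔ fl') ⊔ Cons (sc'' ⊔ fl'') = Cons ((sc' ⊔ fl') ⊔ (sc'' ⊔ fl'')) := by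
  obtain ⟨⟨-, -, -, hfl, hsc⟩, hsc'fl'', hsc''fl'⟩ := hj
  simp only [matchLang_eq_bot_iff] at hsc hsc'fl'' hsc''fl'
  refine le_antisymm (sup_le (cons_mono le_sup_left) (cons_mono le_sup_right)) fun w hw => ?_
  obtain ⟨xs, hxs, hw⟩ := mem_matchClosure_iff.mp hw
  obtain ⟨s, hs, hs' | hs''⟩ : ∃ s ∈ xs, s ∈ sc' ∨ s ∈ sc'' := by
    by_contra! hno
    have : w ∈ Cons (fl' ⊔ fl'') := mem_matchClosure_iff.mpr ⟨xs, fun x hx => ?_, hw⟩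
    · rw [hfl] at this
      exact this
    · rcases hxs x hx with (h | h) | (h | h)
      exacts [absurd h (hno x hx).1, .inl h, absurd h (hno x hx).2, .inr h]
  · refine .inl (hw.mem_matchClosure_of_forall_matchWord_eq_none hxs hs (.inl hs') ?_)
    rintro x (hx | hx)
    · exact hsc s (.inl hs') x (.inr hx)
    · exact hsc'fl'' s hs' x hx
  · refine .inr (hw.mem_matchClosure_of_forall_matchWord_eq_none (C := sc' ⊔ fl')
      (fun x hx => sup_comm (sc' ⊔ fl') _ ▸ hxs x hx) hs (.inl hs'') ?_)
    rintro x (hx | hx)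
    · exact hsc s (.inr hs'') x (.inl hx)
    · exact hsc''fl' s hs'' x hx

/-- if `B' = sc' ∪ fl'` and `B'' = sc'' ∪ fl''` are decomposed bases that
are joinable, then `C(B') ∪ C(B'') = C(B' ∪ B'')`. -/
theorem cons_union_of_joinable (sc' fl' sc'' fl'' : Language (DLetter S))
    (h' : IsDecomposed (sc' ⊔ fl') sc' fl')
    (h'' : IsDecomposed (sc'' ⊔ fl'') sc'' fl'')
    (hj : Joinable sc' fl' sc'' fl'') :
    Cons (sc' ⊔ fl') ⊔ Cons (sc'' ⊔ fl'') = Cons ((sc' ⊔ fl') ⊔ (sc'' ⊔ fl'')) :=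
  cons_union_of_joinable_general sc' fl' sc'' fl'' hj

end Consensual
end
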